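/- Let (R,B,L) satisfy R^n b · l ∈ ℤ for all n ∈ ℕ, b ∈ B, l ∈ L, and suppose N^{-1/2}(e^{2πi b·l}) is unitary. Let μ satisfy μ̂(t) = χ_B(t) μ̂(R*^{-1}t) and P as above. Then Q(t) := Σ_{λ∈P}|μ̂(t−λ)|² satisfies the functional identity Q(t) = Σ_{l∈L} |χ_B(t−l)|² Q(R*^{-1}(t−l)) for all t ∈ ℝ^ν. -/

import Mathlib

/-!
Since `0 ∈ L`, every `λ ∈ P` has the form `l + R*λ'` with `l ∈ L`, `λ' ∈ P`, and the integrality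
`b·R*λ' ∈ ℤ` makes `χ_B` invariant under translation by `R*P`. Together with the orthogonality of
the rows of the Hadamard matrix this forces `l` to be unique, so `(l, w) ↦ l + w` is a bijection
`L × R*P ≃ P`. Inserting `μ̂(t) = χ_B(t) μ̂(R*⁻¹t)` into `Q` and regrouping along this bijection
(in `ℝ≥0∞`, where no summability is needed) gives the identity when `R*` is invertible; there `Q`
is finite by Bessel's inequality, because the same refinement equation makes the exponentials
`e^{2πiλ·x}`, `λ ∈ P`, orthonormal in `L²(μ)` (induction on the number of digits).
When `R*` is singular, `R*⁻¹ = 0` in Mathlib, so `μ̂ = χ_B`, `Q` is constant, and the identity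
reduces to `Σ_l |χ_B(t - l)|² = 1`, i.e. to the unitarity of the Hadamard matrix.
-/

open MeasureTheory

/-- `χ_B(t) = N^{-1} Σ_{b∈B} e^{2πi b·t}` (with `N = #B`). -/
noncomputable def chiB {ν : ℕ} (B : Finset (Fin ν → ℝ)) (t : Fin ν → ℝ) : ℂ :=
  (B.card : ℂ)⁻¹ * ∑ b ∈ B,
    Complex.exp ((((2 : ℝ) * Real.pi * ∑ i, b i * t i : ℝ) : ℂ) * Complex.I)

/-- Fourier transform `μ̂(t) = ∫ e^{2πi t·x} dμ(x)`. -/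
noncomputable def muHatPi {ν : ℕ} (μ : Measure (Fin ν → ℝ)) (t : Fin ν → ℝ) : ℂ :=
  ∫ x, Complex.exp ((((2 : ℝ) * Real.pi * ∑ i, t i * x i : ℝ) : ℂ) * Complex.I) ∂μ

/-- `P(L) = { l₀ + R*l₁ + R*²l₂ + ⋯ : lᵢ ∈ L, finite sums }` for a matrix `R*`. -/
def PsetL {ν : ℕ} (Rt : Matrix (Fin ν) (Fin ν) ℝ) (L : Finset (Fin ν → ℝ)) :
    Set (Fin ν → ℝ) :=
  {lam | ∃ (n : ℕ) (l : ℕ → (Fin ν → ℝ)), (∀ i, l i ∈ L) ∧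
    lam = ∑ i ∈ Finset.range n, (Rt ^ i).mulVec (l i)}

/-- `Q(t) = Σ_{λ∈P} |μ̂(t−λ)|²`. -/
noncomputable def Qfun {ν : ℕ} (μ : Measure (Fin ν → ℝ)) (P : Set (Fin ν → ℝ))
    (t : Fin ν → ℝ) : ℝ :=
  ∑' lam : P, ‖muHatPi μ (t - (lam : Fin ν → ℝ))‖ ^ 2

open Matrix Real FourierTransform
open scoped ENNReal

namespace QFunctional

variable {ν : ℕ}

def IntegralDots (R : Matrix (Fin ν) (Fin ν) ℝ) (B L : Finset (Fin ν → ℝ)) : Prop :=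
  ∀ n : ℕ, 0 < n → ∀ b ∈ B, ∀ l ∈ L, ∃ k : ℤ, (∑ i, (R ^ n).mulVec b i * l i) = (k : ℝ)

/-- The sum is the inner product of the rows `l`, `l'` of the matrix
`(e^{2πi b·l})_{l ∈ L, b ∈ B}`. -/
def OrthogonalRows (B L : Finset (Fin ν → ℝ)) : Prop :=
  ∀ l ∈ L, ∀ l' ∈ L, l ≠ l' →
    ∑ b ∈ B, Complex.exp ((((2 : ℝ) * Real.pi * ∑ i, b i * (l i - l' i) : ℝ) : ℂ) * Complex.I) = 0

lemma fourierChar_intCast (k : ℤ) : 𝐞 k = 1 := Circle.exp_two_pi_mul_int k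

lemma chiB_eq_sum_fourierChar (B : Finset (Fin ν → ℝ)) (t : Fin ν → ℝ) :
    chiB B t = (B.card : ℂ)⁻¹ * ∑ b ∈ B, (𝐞 (b ⬝ᵥ t) : ℂ) := rfl

lemma muHatPi_eq_integral_fourierChar (μ : Measure (Fin ν → ℝ)) (t : Fin ν → ℝ) :
    muHatPi μ t = ∫ x, (𝐞 (t ⬝ᵥ x) : ℂ) ∂μ := rfl

section Digits

variable {Rt : Matrix (Fin ν) (Fin ν) ℝ} {L : Finset (Fin ν → ℝ)}

def digitSums (Rt : Matrix (Fin ν) (Fin ν) ℝ) (L : Finset (Fin ν → ℝ)) (n : ℕ) :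
    Set (Fin ν → ℝ) :=
  {lam | ∃ l : ℕ → (Fin ν → ℝ), (∀ i, l i ∈ L) ∧ lam = ∑ i ∈ Finset.range n, (Rt ^ i) *ᵥ l i}

lemma mem_PsetL_iff {lam : Fin ν → ℝ} : lam ∈ PsetL Rt L ↔ ∃ n, lam ∈ digitSums Rt L n :=
  Iff.rfl

lemma eq_zero_of_mem_digitSums_zero {lam : Fin ν → ℝ} (hlam : lam ∈ digitSums Rt L 0) :
    lam = 0 := by
  obtain ⟨_, _, rfl⟩ := hlam
  simp

lemma zero_mem_digitSums_zero (h0L : (0 : Fin ν → ℝ) ∈ L) : 0 ∈ digitSums Rt L 0 :=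
  ⟨fun _ => 0, fun _ => h0L, by simp⟩

lemma mem_digitSums_succ {n : ℕ} {lam : Fin ν → ℝ} :
    lam ∈ digitSums Rt L (n + 1) ↔ ∃ l ∈ L, ∃ η ∈ digitSums Rt L n, lam = l + Rt *ᵥ η := by
  have hshift : ∀ l : ℕ → (Fin ν → ℝ), ∑ i ∈ Finset.range (n + 1), (Rt ^ i) *ᵥ l i
      = l 0 + Rt *ᵥ ∑ i ∈ Finset.range n, (Rt ^ i) *ᵥ l (i + 1) := fun l => by
    simp [Finset.sum_range_succ', mulVec_sum, mulVec_mulVec, pow_succ', add_comm]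
  constructor
  · rintro ⟨l, hl, rfl⟩
    exact ⟨l 0, hl 0, _, ⟨fun i => l (i + 1), fun i => hl (i + 1), rfl⟩, hshift l⟩
  · rintro ⟨l₀, hl₀, η, ⟨l, hl, rfl⟩, rfl⟩
    refine ⟨fun | 0 => l₀ | i + 1 => l i, fun | 0 => hl₀ | i + 1 => hl i, ?_⟩
    rw [hshift]

lemma digitSums_mono (h0L : (0 : Fin ν → ℝ) ∈ L) : Monotone (digitSums Rt L) := by
  refine monotone_nat_of_le_succ fun n => ?_
  induction n with
  | zero =>
    intro lam hlam
    rw [eq_zero_of_mem_digitSums_zero hlam]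
    exact mem_digitSums_succ.2 ⟨0, h0L, 0, zero_mem_digitSums_zero h0L, by simp⟩
  | succ n ih =>
    intro lam hlam
    obtain ⟨l, hl, η, hη, rfl⟩ := mem_digitSums_succ.1 hlam
    exact mem_digitSums_succ.2 ⟨l, hl, η, ih hη, rfl⟩

lemma zero_mem_PsetL (h0L : (0 : Fin ν → ℝ) ∈ L) : 0 ∈ PsetL Rt L :=
  mem_PsetL_iff.2 ⟨0, zero_mem_digitSums_zero h0L⟩

lemma add_mulVec_mem_PsetL {l η : Fin ν → ℝ} (hl : l ∈ L) (hη : η ∈ PsetL Rt L) :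
    l + Rt *ᵥ η ∈ PsetL Rt L := by
  obtain ⟨n, hn⟩ := mem_PsetL_iff.1 hη
  exact mem_PsetL_iff.2 ⟨n + 1, mem_digitSums_succ.2 ⟨l, hl, η, hn, rfl⟩⟩

lemma exists_add_mulVec_of_mem_PsetL (h0L : (0 : Fin ν → ℝ) ∈ L) {lam : Fin ν → ℝ}
    (hlam : lam ∈ PsetL Rt L) : ∃ l ∈ L, ∃ η ∈ PsetL Rt L, lam = l + Rt *ᵥ η := by
  obtain ⟨_ | n, hn⟩ := mem_PsetL_iff.1 hlam
  · exact ⟨0, h0L, 0, zero_mem_PsetL h0L, by simp [eq_zero_of_mem_digitSums_zero hn]⟩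
  · obtain ⟨l, hl, η, hη, rfl⟩ := mem_digitSums_succ.1 hn
    exact ⟨l, hl, η, mem_PsetL_iff.2 ⟨n, hη⟩, rfl⟩

end Digits

lemma coe_fourierChar_mul_conj (x y : ℝ) :
    (𝐞 x : ℂ) * (starRingEnd ℂ) (𝐞 y) = 𝐞 (x - y) := by
  rw [Circle.starRingEnd_addChar, ← Circle.coe_mul, ← AddChar.map_add_eq_mul, sub_eq_add_neg]

section Characters

variable {R : Matrix (Fin ν) (Fin ν) ℝ} {B L : Finset (Fin ν → ℝ)}

lemma fourierChar_dotProduct_mulVec_eq_one (hcompat : IntegralDots R B L)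
    {b η : Fin ν → ℝ} (hb : b ∈ B) (hη : η ∈ PsetL Rᵀ L) : 𝐞 (b ⬝ᵥ Rᵀ *ᵥ η) = 1 := by
  obtain ⟨n, l, hl, rfl⟩ := hη
  have hterm : ∀ i, b ⬝ᵥ Rᵀ *ᵥ ((Rᵀ ^ i) *ᵥ l i) = (R ^ (i + 1)) *ᵥ b ⬝ᵥ l i := fun i => by
    rw [mulVec_mulVec, ← pow_succ', ← transpose_pow, dotProduct_mulVec, vecMul_transpose]
  rw [mulVec_sum, dotProduct_sum]
  refine Finset.sum_induction _ (fun x => 𝐞 x = 1)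
    (fun x y hx hy => by rw [AddChar.map_add_eq_mul, hx, hy, mul_one]) (AddChar.map_zero_eq_one _)
    fun i _ => ?_
  obtain ⟨k, hk⟩ := hcompat (i + 1) i.succ_pos b hb (l i) (hl i)
  rw [hterm, ← fourierChar_intCast k]
  exact congrArg 𝐞 hk

lemma chiB_add_mulVec (hcompat : IntegralDots R B L)
    {η : Fin ν → ℝ} (hη : η ∈ PsetL Rᵀ L) (s : Fin ν → ℝ) :
    chiB B (s + Rᵀ *ᵥ η) = chiB B s := by
  simp only [chiB_eq_sum_fourierChar, dotProduct_add, AddChar.map_add_eq_mul]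
  congr 1
  refine Finset.sum_congr rfl fun b hb => ?_
  rw [fourierChar_dotProduct_mulVec_eq_one hcompat hb hη, mul_one]

lemma chiB_sub_mulVec (hcompat : IntegralDots R B L)
    {η : Fin ν → ℝ} (hη : η ∈ PsetL Rᵀ L) (s : Fin ν → ℝ) :
    chiB B (s - Rᵀ *ᵥ η) = chiB B s := by
  rw [← chiB_add_mulVec hcompat hη (s - Rᵀ *ᵥ η), sub_add_cancel]

lemma sum_fourierChar_dotProduct (hB : B.Nonempty) (t : Fin ν → ℝ) :
    ∑ b ∈ B, (𝐞 (b ⬝ᵥ t) : ℂ) = B.card * chiB B t := by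
  have hN : (B.card : ℂ) ≠ 0 := by exact_mod_cast hB.card_pos.ne'
  rw [chiB_eq_sum_fourierChar, mul_inv_cancel_left₀ hN]

lemma chiB_zero (hB : B.Nonempty) : chiB B 0 = 1 := by
  have hN : (B.card : ℂ) ≠ 0 := by exact_mod_cast hB.card_pos.ne'
  simp [chiB_eq_sum_fourierChar, hN]

lemma chiB_sub_eq_zero (hH : OrthogonalRows B L)
    {l l' : Fin ν → ℝ} (hl : l ∈ L) (hl' : l' ∈ L) (hne : l ≠ l') :
    chiB B (l - l') = 0 :=
  mul_eq_zero_of_right _ (hH l hl l' hl' hne)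

lemma chiB_sub_eq_ite (hB : B.Nonempty) (hH : OrthogonalRows B L)
    {l l' : Fin ν → ℝ} (hl : l ∈ L) (hl' : l' ∈ L) :
    chiB B (l - l') = if l = l' then 1 else 0 := by
  split_ifs with h
  · rw [h, sub_self, chiB_zero hB]
  · exact chiB_sub_eq_zero hH hl hl' h

lemma eq_of_add_mulVec_eq (hB : B.Nonempty)
    (hcompat : IntegralDots R B L) (hH : OrthogonalRows B L)
    {l l' η η' : Fin ν → ℝ} (hl : l ∈ L) (hl' : l' ∈ L)
    (hη : η ∈ PsetL Rᵀ L) (hη' : η' ∈ PsetL Rᵀ L) (h : l + Rᵀ *ᵥ η = l' + Rᵀ *ᵥ η') :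
    l = l' := by
  by_contra hne
  have hdiff : l - l' = 0 + Rᵀ *ᵥ η' - Rᵀ *ᵥ η := by
    rw [zero_add, sub_eq_sub_iff_add_eq_add, h, add_comm]
  have h0 := chiB_sub_eq_zero hH hl hl' hne
  rw [hdiff, chiB_sub_mulVec hcompat hη, chiB_add_mulVec hcompat hη', chiB_zero hB] at h0
  exact one_ne_zero h0

lemma tsum_PsetL_eq_sum_tsum (hB : B.Nonempty) (h0L : (0 : Fin ν → ℝ) ∈ L)
    (hcompat : IntegralDots R B L) (hH : OrthogonalRows B L)
    (f : (Fin ν → ℝ) → ℝ≥0∞) :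
    ∑' η : PsetL Rᵀ L, f η = ∑ l ∈ L, ∑' w : (Rᵀ *ᵥ ·) '' PsetL Rᵀ L, f (l + w) := by
  let φ : L × ((Rᵀ *ᵥ ·) '' PsetL Rᵀ L) → PsetL Rᵀ L := fun p =>
    ⟨p.1 + p.2, by
      obtain ⟨η, hη, hw⟩ := p.2.2
      rw [← hw]
      exact add_mulVec_mem_PsetL p.1.2 hη⟩
  have hφ : Function.Bijective φ := by
    constructor
    · rintro ⟨⟨l, hl⟩, ⟨_, η, hη, rfl⟩⟩ ⟨⟨l', hl'⟩, ⟨_, η', hη', rfl⟩⟩ h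
      have h' : l + Rᵀ *ᵥ η = l' + Rᵀ *ᵥ η' := congrArg Subtype.val h
      obtain rfl := eq_of_add_mulVec_eq hB hcompat hH hl hl' hη hη' h'
      simp [add_left_cancel h']
    · rintro ⟨_, hlam⟩
      obtain ⟨l, hl, η, hη, rfl⟩ := exists_add_mulVec_of_mem_PsetL h0L hlam
      exact ⟨(⟨l, hl⟩, ⟨_, η, hη, rfl⟩), rfl⟩
  calc ∑' η : PsetL Rᵀ L, f η
      = ∑' p : L × ((Rᵀ *ᵥ ·) '' PsetL Rᵀ L), f (p.1 + p.2) :=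
        ((Equiv.ofBijective φ hφ).tsum_eq fun η => f η).symm
    _ = ∑' (l : L) (w : (Rᵀ *ᵥ ·) '' PsetL Rᵀ L), f (l + w) :=
        ENNReal.tsum_prod (f := fun (l : L) (w : (Rᵀ *ᵥ ·) '' PsetL Rᵀ L) => f (l + w))
    _ = _ := by
      rw [tsum_fintype]
      exact Finset.sum_coe_sort L fun l => ∑' w : (Rᵀ *ᵥ ·) '' PsetL Rᵀ L, f (l + w)

end Characters

noncomputable def eQfun (μ : Measure (Fin ν → ℝ)) (P : Set (Fin ν → ℝ)) (t : Fin ν → ℝ) :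
    ℝ≥0∞ :=
  ∑' η : P, ‖muHatPi μ (t - η)‖ₑ ^ 2

lemma Qfun_eq_toReal_eQfun (μ : Measure (Fin ν → ℝ)) (P : Set (Fin ν → ℝ)) (t : Fin ν → ℝ) :
    Qfun μ P t = (eQfun μ P t).toReal := by
  rw [eQfun, ENNReal.tsum_toReal_eq fun _ => by finiteness]
  simp [Qfun]

lemma eQfun_ne_top {μ : Measure (Fin ν → ℝ)} {P : Set (Fin ν → ℝ)} {t : Fin ν → ℝ}
    (h : Summable fun η : P => ‖muHatPi μ (t - η)‖ ^ 2) : eQfun μ P t ≠ ⊤ := by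
  simp_rw [eQfun, ← ofReal_norm, ← ENNReal.ofReal_pow (norm_nonneg _),
    ← ENNReal.ofReal_tsum_of_nonneg (fun _ => by positivity) h]
  exact ENNReal.ofReal_ne_top

lemma muHatPi_zero (μ : Measure (Fin ν → ℝ)) [IsProbabilityMeasure μ] : muHatPi μ 0 = 1 := by
  simp [muHatPi_eq_integral_fourierChar]

section L2

variable (μ : Measure (Fin ν → ℝ)) [IsFiniteMeasure μ]

lemma memLp_fourierChar_dotProduct (s : Fin ν → ℝ) :
    MemLp (fun x => (𝐞 (s ⬝ᵥ x) : ℂ)) 2 μ :=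
  MemLp.of_bound (by fun_prop) 1 (ae_of_all _ fun x => (Circle.norm_coe _).le)

noncomputable def fourierL2 (s : Fin ν → ℝ) : Lp ℂ 2 μ :=
  (memLp_fourierChar_dotProduct μ s).toLp _

lemma inner_fourierL2 (s s' : Fin ν → ℝ) :
    inner ℂ (fourierL2 μ s) (fourierL2 μ s') = muHatPi μ (s' - s) := by
  rw [L2.inner_def, muHatPi_eq_integral_fourierChar]
  refine integral_congr_ae ?_
  filter_upwards [(memLp_fourierChar_dotProduct μ s).coeFn_toLp,
    (memLp_fourierChar_dotProduct μ s').coeFn_toLp] with x hx hx'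
  rw [fourierL2, fourierL2, hx, hx', RCLike.inner_apply, coe_fourierChar_mul_conj, sub_dotProduct]

end L2

lemma summable_norm_muHatPi_sub_sq (μ : Measure (Fin ν → ℝ)) [IsProbabilityMeasure μ]
    {P : Set (Fin ν → ℝ)}
    (horth : ∀ η ∈ P, ∀ η' ∈ P, η ≠ η' → muHatPi μ (η - η') = 0) (t : Fin ν → ℝ) :
    Summable fun η : P => ‖muHatPi μ (t - η)‖ ^ 2 := by
  classical
  have hon : Orthonormal ℂ fun η : P => fourierL2 μ η := by
    rw [orthonormal_iff_ite]
    rintro ⟨η, hη⟩ ⟨η', hη'⟩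
    rw [inner_fourierL2]
    split_ifs with h
    · cases h
      rw [sub_self, muHatPi_zero]
    · exact horth η' hη' η hη fun h' => h (Subtype.ext h'.symm)
  simpa only [inner_fourierL2] using hon.inner_products_summable (fourierL2 μ t)

section Hadamard

variable {B L : Finset (Fin ν → ℝ)}

lemma sum_fourierChar_sub_dotProduct (hBL : B.card = L.card) (hB : B.Nonempty)
    (hH : OrthogonalRows B L)
    {b b' : Fin ν → ℝ} (hb : b ∈ B) (hb' : b' ∈ B) :
    ∑ l ∈ L, (𝐞 ((b' - b) ⬝ᵥ l) : ℂ) = if b = b' then (B.card : ℂ) else 0 := by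
  classical
  have hN : (B.card : ℂ) ≠ 0 := by exact_mod_cast hB.card_pos.ne'
  let H : Matrix L B ℂ := Matrix.of fun l b => 𝐞 ((b : Fin ν → ℝ) ⬝ᵥ l)
  have hrow : H * Hᴴ = (B.card : ℂ) • 1 := by
    ext l l'
    simp only [mul_apply, conjTranspose_apply, H, of_apply, RCLike.star_def,
      coe_fourierChar_mul_conj, ← dotProduct_sub]
    rw [Finset.sum_coe_sort B fun b => (𝐞 (b ⬝ᵥ ((l : Fin ν → ℝ) - l')) : ℂ),
      sum_fourierChar_dotProduct hB, chiB_sub_eq_ite hB hH l.2 l'.2]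
    simp only [Matrix.smul_apply, one_apply, Subtype.ext_iff, smul_eq_mul]
  have hcol : Hᴴ * H = (B.card : ℂ) • 1 := by
    rw [← inv_smul_eq_iff₀ hN, ← Matrix.mul_smul]
    refine (mul_eq_one_comm_of_equiv (Fintype.equivOfCardEq (by simp [hBL]))).1 ?_
    rw [smul_mul, hrow, smul_smul, inv_mul_cancel₀ hN, one_smul]
  have hbb' := congrFun₂ hcol ⟨b, hb⟩ ⟨b', hb'⟩
  simp only [mul_apply, conjTranspose_apply, H, of_apply, RCLike.star_def,
    mul_comm (starRingEnd ℂ _), coe_fourierChar_mul_conj, ← sub_dotProduct] at hbb'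
  rw [← Finset.sum_coe_sort L fun l => (𝐞 ((b' - b) ⬝ᵥ l) : ℂ), hbb']
  simp [one_apply]

lemma sum_norm_chiB_sub_sq (hBL : B.card = L.card) (hB : B.Nonempty)
    (hH : OrthogonalRows B L) (s : Fin ν → ℝ) :
    ∑ l ∈ L, ‖chiB B (s - l)‖ ^ 2 = 1 := by
  have hN : (B.card : ℂ) ≠ 0 := by exact_mod_cast hB.card_pos.ne'
  have hexpand (l : Fin ν → ℝ) : ((‖chiB B (s - l)‖ ^ 2 : ℝ) : ℂ) = (B.card : ℂ)⁻¹ ^ 2 *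
      ∑ b ∈ B, ∑ b' ∈ B, (𝐞 ((b - b') ⬝ᵥ s) : ℂ) * 𝐞 ((b' - b) ⬝ᵥ l) := by
    rw [Complex.ofReal_pow, ← Complex.mul_conj', chiB_eq_sum_fourierChar, map_mul, map_sum,
      map_inv₀, Complex.conj_natCast, mul_mul_mul_comm, Finset.sum_mul_sum, ← sq]
    congr 1
    refine Finset.sum_congr rfl fun b _ => Finset.sum_congr rfl fun b' _ => ?_
    rw [coe_fourierChar_mul_conj, ← Circle.coe_mul, ← AddChar.map_add_eq_mul]
    congr 2
    simp only [dotProduct_sub, sub_dotProduct]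
    ring
  have hinner {b : Fin ν → ℝ} (hb : b ∈ B) :
      ∑ b' ∈ B, ∑ l ∈ L, (𝐞 ((b - b') ⬝ᵥ s) : ℂ) * 𝐞 ((b' - b) ⬝ᵥ l) = B.card := by
    simp_rw [← Finset.mul_sum]
    rw [Finset.sum_congr rfl fun b' hb' => by rw [sum_fourierChar_sub_dotProduct hBL hB hH hb hb']]
    simp [hb]
  apply Complex.ofReal_injective
  rw [Complex.ofReal_sum, Finset.sum_congr rfl fun l _ => hexpand l, ← Finset.mul_sum,
    Finset.sum_comm, Finset.sum_congr rfl fun b _ => Finset.sum_comm,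
    Finset.sum_congr rfl fun b hb => hinner hb, Finset.sum_const, nsmul_eq_mul, ← sq,
    Complex.ofReal_one, inv_pow, inv_mul_cancel₀ (pow_ne_zero 2 hN)]

lemma sum_enorm_chiB_sub_sq (hBL : B.card = L.card) (hB : B.Nonempty)
    (hH : OrthogonalRows B L) (s : Fin ν → ℝ) :
    ∑ l ∈ L, ‖chiB B (s - l)‖ₑ ^ 2 = 1 := by
  rw [← ENNReal.ofReal_one, ← sum_norm_chiB_sub_sq hBL hB hH s,
    ENNReal.ofReal_sum_of_nonneg fun _ _ => by positivity]
  simp_rw [ENNReal.ofReal_pow (norm_nonneg _), ofReal_norm]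

end Hadamard

section Transfer

variable {R : Matrix (Fin ν) (Fin ν) ℝ} {B L : Finset (Fin ν → ℝ)} {μ : Measure (Fin ν → ℝ)}

lemma muHatPi_sub_eq_zero_of_mem_digitSums (hR : IsUnit Rᵀ.det)
    (hcompat : IntegralDots R B L) (hH : OrthogonalRows B L)
    (hμhat : ∀ t : Fin ν → ℝ, muHatPi μ t = chiB B t * muHatPi μ (Rᵀ⁻¹ *ᵥ t)) (n : ℕ) :
    ∀ η ∈ digitSums Rᵀ L n, ∀ η' ∈ digitSums Rᵀ L n, η ≠ η' → muHatPi μ (η - η') = 0 := by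
  induction n with
  | zero =>
    intro η hη η' hη' hne
    exact absurd ((eq_zero_of_mem_digitSums_zero hη).trans
      (eq_zero_of_mem_digitSums_zero hη').symm) hne
  | succ n ih =>
    intro η hη η' hη' hne
    obtain ⟨l, hl, κ, hκ, rfl⟩ := mem_digitSums_succ.1 hη
    obtain ⟨l', hl', κ', hκ', rfl⟩ := mem_digitSums_succ.1 hη'
    have hdiff : l + Rᵀ *ᵥ κ - (l' + Rᵀ *ᵥ κ') = l - l' + Rᵀ *ᵥ κ - Rᵀ *ᵥ κ' := by abel
    rw [hμhat, hdiff]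
    by_cases hll : l = l'
    · subst hll
      have hκκ' : κ ≠ κ' := by
        rintro rfl
        exact hne rfl
      rw [sub_self, zero_add, ← mulVec_sub, mulVec_mulVec, nonsing_inv_mul _ hR, one_mulVec,
        ih κ hκ κ' hκ' hκκ', mul_zero]
    · rw [chiB_sub_mulVec hcompat (mem_PsetL_iff.2 ⟨n, hκ'⟩),
        chiB_add_mulVec hcompat (mem_PsetL_iff.2 ⟨n, hκ⟩), chiB_sub_eq_zero hH hl hl' hll,
        zero_mul]

lemma muHatPi_sub_eq_zero_of_mem_PsetL (hR : IsUnit Rᵀ.det) (h0L : (0 : Fin ν → ℝ) ∈ L)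
    (hcompat : IntegralDots R B L) (hH : OrthogonalRows B L)
    (hμhat : ∀ t : Fin ν → ℝ, muHatPi μ t = chiB B t * muHatPi μ (Rᵀ⁻¹ *ᵥ t))
    {η η' : Fin ν → ℝ} (hη : η ∈ PsetL Rᵀ L) (hη' : η' ∈ PsetL Rᵀ L) (hne : η ≠ η') :
    muHatPi μ (η - η') = 0 := by
  obtain ⟨n, hn⟩ := mem_PsetL_iff.1 hη
  obtain ⟨n', hn'⟩ := mem_PsetL_iff.1 hη'
  exact muHatPi_sub_eq_zero_of_mem_digitSums hR hcompat hH hμhat (max n n') _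
    (digitSums_mono h0L (le_max_left _ _) hn) _ (digitSums_mono h0L (le_max_right _ _) hn') hne

lemma eQfun_eq_sum_tsum (hB : B.Nonempty) (h0L : (0 : Fin ν → ℝ) ∈ L)
    (hcompat : IntegralDots R B L) (hH : OrthogonalRows B L)
    (hμhat : ∀ t : Fin ν → ℝ, muHatPi μ t = chiB B t * muHatPi μ (Rᵀ⁻¹ *ᵥ t)) (t : Fin ν → ℝ) :
    eQfun μ (PsetL Rᵀ L) t = ∑ l ∈ L, ‖chiB B (t - l)‖ₑ ^ 2 *
      ∑' w : (Rᵀ *ᵥ ·) '' PsetL Rᵀ L, ‖muHatPi μ (Rᵀ⁻¹ *ᵥ (t - l - w))‖ₑ ^ 2 := by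
  rw [eQfun, tsum_PsetL_eq_sum_tsum hB h0L hcompat hH fun η => ‖muHatPi μ (t - η)‖ₑ ^ 2]
  refine Finset.sum_congr rfl fun l _ => ?_
  rw [← ENNReal.tsum_mul_left]
  refine tsum_congr fun ⟨_, η, hη, hw⟩ => ?_
  subst hw
  rw [← sub_sub, hμhat, chiB_sub_mulVec hcompat hη, enorm_mul, mul_pow]

lemma eQfun_eq_sum_of_isUnit (hR : IsUnit Rᵀ.det) (hB : B.Nonempty) (h0L : (0 : Fin ν → ℝ) ∈ L)
    (hcompat : IntegralDots R B L) (hH : OrthogonalRows B L)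
    (hμhat : ∀ t : Fin ν → ℝ, muHatPi μ t = chiB B t * muHatPi μ (Rᵀ⁻¹ *ᵥ t)) (t : Fin ν → ℝ) :
    eQfun μ (PsetL Rᵀ L) t =
      ∑ l ∈ L, ‖chiB B (t - l)‖ₑ ^ 2 * eQfun μ (PsetL Rᵀ L) (Rᵀ⁻¹ *ᵥ (t - l)) := by
  have hinj : Function.Injective (Rᵀ *ᵥ ·) :=
    mulVec_injective_iff_isUnit.2 ((isUnit_iff_isUnit_det _).2 hR)
  rw [eQfun_eq_sum_tsum hB h0L hcompat hH hμhat]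
  refine Finset.sum_congr rfl fun l _ => ?_
  rw [tsum_image (fun w => ‖muHatPi μ (Rᵀ⁻¹ *ᵥ (t - l - w))‖ₑ ^ 2) hinj.injOn, eQfun]
  simp only [mulVec_sub, mulVec_mulVec, nonsing_inv_mul _ hR, one_mulVec]

lemma Qfun_eq_sum_of_isUnit [IsProbabilityMeasure μ] (hR : IsUnit Rᵀ.det) (hB : B.Nonempty)
    (h0L : (0 : Fin ν → ℝ) ∈ L) (hcompat : IntegralDots R B L) (hH : OrthogonalRows B L)
    (hμhat : ∀ t : Fin ν → ℝ, muHatPi μ t = chiB B t * muHatPi μ (Rᵀ⁻¹ *ᵥ t)) (t : Fin ν → ℝ) :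
    Qfun μ (PsetL Rᵀ L) t =
      ∑ l ∈ L, ‖chiB B (t - l)‖ ^ 2 * Qfun μ (PsetL Rᵀ L) (Rᵀ⁻¹ *ᵥ (t - l)) := by
  have hfin (s : Fin ν → ℝ) : eQfun μ (PsetL Rᵀ L) s ≠ ⊤ :=
    eQfun_ne_top <| summable_norm_muHatPi_sub_sq μ
      (fun _ hη _ hη' => muHatPi_sub_eq_zero_of_mem_PsetL hR h0L hcompat hH hμhat hη hη') s
  simp only [Qfun_eq_toReal_eQfun]
  rw [eQfun_eq_sum_of_isUnit hR hB h0L hcompat hH hμhat,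
    ENNReal.toReal_sum fun l _ => ENNReal.mul_ne_top (by finiteness) (hfin _)]
  simp only [ENNReal.toReal_mul, ENNReal.toReal_pow, toReal_enorm]

/-- Here `Rᵀ⁻¹ = 0`, so `μ̂ = χ_B` and `Q` is constant, possibly with the junk value `0` of a
divergent sum. -/
lemma Qfun_eq_sum_of_not_isUnit [IsProbabilityMeasure μ] (hR : ¬IsUnit Rᵀ.det)
    (hBL : B.card = L.card) (hB : B.Nonempty) (h0L : (0 : Fin ν → ℝ) ∈ L)
    (hcompat : IntegralDots R B L) (hH : OrthogonalRows B L)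
    (hμhat : ∀ t : Fin ν → ℝ, muHatPi μ t = chiB B t * muHatPi μ (Rᵀ⁻¹ *ᵥ t)) (t : Fin ν → ℝ) :
    Qfun μ (PsetL Rᵀ L) t =
      ∑ l ∈ L, ‖chiB B (t - l)‖ ^ 2 * Qfun μ (PsetL Rᵀ L) (Rᵀ⁻¹ *ᵥ (t - l)) := by
  have hconst (s : Fin ν → ℝ) :
      eQfun μ (PsetL Rᵀ L) s = ∑' _ : (Rᵀ *ᵥ ·) '' PsetL Rᵀ L, 1 := by
    rw [eQfun_eq_sum_tsum hB h0L hcompat hH hμhat, nonsing_inv_apply_not_isUnit _ hR]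
    simp only [zero_mulVec, muHatPi_zero, enorm_one, one_pow]
    rw [← Finset.sum_mul, sum_enorm_chiB_sub_sq hBL hB hH, one_mul]
  simp only [Qfun_eq_toReal_eQfun, hconst]
  rw [← Finset.sum_mul, sum_norm_chiB_sub_sq hBL hB hH, one_mul]

end Transfer

end QFunctional

open QFunctional in
theorem Q_functional_identity_general {ν N : ℕ}
    (R : Matrix (Fin ν) (Fin ν) ℝ)
    (B L : Finset (Fin ν → ℝ))
    (hB : B.card = N) (hL : L.card = N)
    (h0B : (0 : Fin ν → ℝ) ∈ B) (h0L : (0 : Fin ν → ℝ) ∈ L)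
    (hcompat : ∀ n : ℕ, 0 < n → ∀ b ∈ B, ∀ l ∈ L,
      ∃ k : ℤ, (∑ i, (R ^ n).mulVec b i * l i) = (k : ℝ))
    (hH : ∀ l ∈ L, ∀ l' ∈ L, l ≠ l' →
      ∑ b ∈ B,
        Complex.exp ((((2 : ℝ) * Real.pi * ∑ i, b i * (l i - l' i) : ℝ) : ℂ) * Complex.I) = 0)
    (μ : Measure (Fin ν → ℝ)) [IsProbabilityMeasure μ]
    (hμhat : ∀ t : Fin ν → ℝ,
      muHatPi μ t = chiB B t * muHatPi μ ((R.transpose)⁻¹.mulVec t)) :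
    ∀ t : Fin ν → ℝ,
      Qfun μ (PsetL R.transpose L) t
        = ∑ l ∈ L, ‖chiB B (t - l)‖ ^ 2 *
            Qfun μ (PsetL R.transpose L) ((R.transpose)⁻¹.mulVec (t - l)) := by
  intro t
  have hB0 : B.Nonempty := ⟨0, h0B⟩
  by_cases hR : IsUnit R.transpose.det
  · exact Qfun_eq_sum_of_isUnit hR hB0 h0L hcompat hH hμhat t
  · exact Qfun_eq_sum_of_not_isUnit hR (hB.trans hL.symm) hB0 h0L hcompat hH hμhat t

/-- The functional identity `Q(t) = Σ_{l∈L} |χ_B(t−l)|² Q(R*^{-1}(t−l))` for the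
Ruelle transfer operator. -/
theorem Q_functional_identity {ν N : ℕ}
    (R : Matrix (Fin ν) (Fin ν) ℝ)
    (B L : Finset (Fin ν → ℝ))
    (hB : B.card = N) (hL : L.card = N) (hN : 0 < N)
    (h0B : (0 : Fin ν → ℝ) ∈ B) (h0L : (0 : Fin ν → ℝ) ∈ L)
    (hcompat : ∀ n : ℕ, 0 < n → ∀ b ∈ B, ∀ l ∈ L,
      ∃ k : ℤ, (∑ i, (R ^ n).mulVec b i * l i) = (k : ℝ))
    (hH : ∀ l ∈ L, ∀ l' ∈ L, l ≠ l' →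
      ∑ b ∈ B,
        Complex.exp ((((2 : ℝ) * Real.pi * ∑ i, b i * (l i - l' i) : ℝ) : ℂ) * Complex.I) = 0)
    (μ : Measure (Fin ν → ℝ)) [IsProbabilityMeasure μ]
    (hμhat : ∀ t : Fin ν → ℝ,
      muHatPi μ t = chiB B t * muHatPi μ ((R.transpose)⁻¹.mulVec t)) :
    ∀ t : Fin ν → ℝ,
      Qfun μ (PsetL R.transpose L) t
        = ∑ l ∈ L, ‖chiB B (t - l)‖ ^ 2 *
            Qfun μ (PsetL R.transpose L) ((R.transpose)⁻¹.mulVec (t - l)) :=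
  Q_functional_identity_general R B L hB hL h0B h0L hcompat hH μ hμhat
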